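/- arXiv:2007.15178 — 7 statements merged into one kernel-verified Lean document; each statement's English description precedes it below -/
import Mathlib

section
/- Let Λ be a torsion-free group in which the centralizer of every nontrivial element is cyclic. Let Γ be a group and K₁, K₂ ⊴ Γ normal subgroups that commute elementwise ([K₁, K₂] = 1). Then for any homomorphism φ: Γ → Λ whose image is not cyclic, φ is trivial on K₁ or trivial on K₂. -/
/-!
Commuting with a common nontrivial element is a transitive relation in `Λ`, because centralizers
of nontrivial elements are cyclic, hence abelian. If `φ` is nontrivial on both factors, pick
`x ∈ K₁`, `y ∈ K₂` with `a = φ x ≠ 1 ≠ φ y`. For every `t`, both `φ (t x t⁻¹)` and `a` commute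
with `φ y`, hence with each other. In `Λ`, an element `g` such that `g a g⁻¹` commutes with `a`
normalizes the infinite cyclic group `C(a) = ⟨c⟩`, so `g c g⁻¹ = c^{±1}`; the sign `-1` is
impossible since then `g²` would commute with both `g` and `c`, forcing `c = c⁻¹`. Hence
`φ(Γ) ≤ C(a)` is cyclic.
-/

open Subgroup

def IsCommTransitive (G : Type*) [Group G] : Prop :=
  ∀ ⦃a b c : G⦄, b ≠ 1 → Commute a b → Commute b c → Commute a c

theorem commute_iff_mul_mul_inv_eq {G : Type*} [Group G] {g c : G} :
    Commute g c ↔ g * c * g⁻¹ = c := by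
  rw [mul_inv_eq_iff_eq_mul]; rfl

theorem eq_one_of_sq_eq_one_of_torsionFree {G : Type*} [Group G]
    (htf : ∀ g : G, g ≠ 1 → ¬IsOfFinOrder g) {g : G} (h : g ^ 2 = 1) : g = 1 :=
  by_contra fun hg ↦ htf g hg (isOfFinOrder_iff_pow_eq_one.mpr ⟨2, two_pos, h⟩)

theorem conj_eq_or_eq_inv_of_conj_mem_zpowers {G : Type*} [Group G] {g c : G}
    (hc : ¬IsOfFinOrder c) (h₁ : g * c * g⁻¹ ∈ zpowers c) (h₂ : g⁻¹ * c * g ∈ zpowers c) :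
    g * c * g⁻¹ = c ∨ g * c * g⁻¹ = c⁻¹ := by
  obtain ⟨n, hn⟩ := mem_zpowers_iff.mp h₁
  obtain ⟨m, hm⟩ := mem_zpowers_iff.mp h₂
  have hmn : c ^ (m * n) = c ^ (1 : ℤ) := by
    have hconj : (g⁻¹ * c * g) ^ n = g⁻¹ * c ^ n * g := by
      simpa using conj_zpow (a := g⁻¹) (b := c) (i := n)
    rw [zpow_mul, hm, hconj, hn]; group
  rcases Int.eq_one_or_neg_one_of_mul_eq_one' (injective_zpow_iff_not_isOfFinOrder.mpr hc hmn)
    with ⟨-, rfl⟩ | ⟨-, rfl⟩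
  · exact .inl (by rw [← hn, zpow_one])
  · exact .inr (by rw [← hn, zpow_neg_one])

namespace IsCommTransitive

variable {G : Type*} [Group G]

theorem of_isCyclic_centralizer (h : ∀ l : G, l ≠ 1 → IsCyclic (centralizer {l})) :
    IsCommTransitive G := fun _ b _ hb hab hbc ↦
  haveI := h b hb
  setLike_mul_comm (mem_centralizer_singleton_iff.mpr hab.eq)
    (mem_centralizer_singleton_iff.mpr hbc.symm.eq)

variable (hG : IsCommTransitive G)
include hG

theorem conj_commute {a g x : G} (ha : a ≠ 1) (h : Commute (g * a * g⁻¹) a)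
    (hx : Commute x a) : Commute (g * x * g⁻¹) a :=
  hG (by rwa [Ne, conj_eq_one_iff]) (hx.conj g) h

theorem eq_one_of_conj_eq_inv (htf : ∀ g : G, g ≠ 1 → ¬IsOfFinOrder g) {g c : G}
    (h : g * c * g⁻¹ = c⁻¹) : c = 1 := by
  have hsq : Commute (g ^ 2) c := by
    rw [commute_iff_mul_mul_inv_eq]
    calc g ^ 2 * c * (g ^ 2)⁻¹ = g * (g * c * g⁻¹) * g⁻¹ := by simp [pow_two, mul_assoc]
      _ = g * c⁻¹ * g⁻¹ := by rw [h]
      _ = (g * c * g⁻¹)⁻¹ := by group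
      _ = c := by rw [h, inv_inv]
  have hgc : Commute g c := by
    by_cases hg : g ^ 2 = 1
    · rw [eq_one_of_sq_eq_one_of_torsionFree htf hg]; exact .one_left c
    · exact hG hg (.self_pow g 2) hsq
  refine eq_one_of_sq_eq_one_of_torsionFree htf ?_
  rw [pow_two]
  nth_rewrite 2 [← inv_inv c]
  rw [← h, commute_iff_mul_mul_inv_eq.mp hgc, mul_inv_cancel]

theorem commute_of_commute_conj (htf : ∀ g : G, g ≠ 1 → ¬IsOfFinOrder g) {a g : G}
    (ha : a ≠ 1) (hcyc : IsCyclic (centralizer {a})) (h : Commute (g * a * g⁻¹) a) :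
    Commute g a := by
  obtain ⟨c, hc⟩ := (centralizer {a}).isCyclic_iff_exists_zpowers_eq_top.mp hcyc
  have hmem : ∀ {x}, x ∈ zpowers c ↔ Commute x a := by
    intro x; rw [hc, mem_centralizer_singleton_iff]; rfl
  obtain ⟨k, rfl⟩ := mem_zpowers_iff.mp (hmem.mpr (.refl a))
  have hc1 : c ≠ 1 := by rintro rfl; exact ha (one_zpow k)
  have hca : Commute c (c ^ k) := .self_zpow c k
  have hinv : Commute (g⁻¹ * c ^ k * g⁻¹⁻¹) (c ^ k) := by
    simpa [mul_assoc] using h.symm.conj g⁻¹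
  have hgc : Commute g c := by
    rcases conj_eq_or_eq_inv_of_conj_mem_zpowers (htf c hc1)
      (hmem.mpr (hG.conj_commute ha h hca))
      (by simpa using hmem.mpr (hG.conj_commute ha hinv hca)) with h | h
    · exact commute_iff_mul_mul_inv_eq.mpr h
    · exact absurd (hG.eq_one_of_conj_eq_inv htf h) hc1
  exact hgc.zpow_right k

end IsCommTransitive

theorem stmt_4_general {Λ : Type*} [Group Λ] (htf : ∀ g : Λ, g ≠ 1 → ¬IsOfFinOrder g)
    (hΛ : ∀ l : Λ, l ≠ 1 → IsCyclic (Subgroup.centralizer {l}))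
    {Γ : Type*} [Group Γ] (K₁ K₂ : Subgroup Γ) (h₁ : K₁.Normal)
    (hcomm : ∀ x ∈ K₁, ∀ y ∈ K₂, Commute x y)
    (φ : Γ →* Λ) (hnc : ¬ IsCyclic φ.range) :
    (∀ x ∈ K₁, φ x = 1) ∨ (∀ y ∈ K₂, φ y = 1) := by
  have hCT := IsCommTransitive.of_isCyclic_centralizer hΛ
  by_contra! h
  obtain ⟨⟨x, hx, ha⟩, ⟨y, hy, hb⟩⟩ := h
  have hcyc := hΛ _ ha
  refine hnc (isCyclic_of_le (H' := centralizer {φ x}) ?_)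
  rintro _ ⟨t, rfl⟩
  have hconj : Commute (φ t * φ x * (φ t)⁻¹) (φ x) :=
    hCT hb (by simpa using (hcomm _ (h₁.conj_mem x hx t) y hy).map φ)
      ((hcomm x hx y hy).map φ).symm
  exact mem_centralizer_singleton_iff.mpr (hCT.commute_of_commute_conj htf ha hcyc hconj).eq

theorem stmt_4 {Λ : Type*} [Group Λ] (htf : ∀ g : Λ, g ≠ 1 → ¬IsOfFinOrder g)
    (hΛ : ∀ l : Λ, l ≠ 1 → IsCyclic (Subgroup.centralizer {l}))
    {Γ : Type*} [Group Γ] (K₁ K₂ : Subgroup Γ) (h₁ : K₁.Normal) (h₂ : K₂.Normal)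
    (hcomm : ∀ x ∈ K₁, ∀ y ∈ K₂, Commute x y)
    (φ : Γ →* Λ) (hnc : ¬ IsCyclic φ.range) :
    (∀ x ∈ K₁, φ x = 1) ∨ (∀ y ∈ K₂, φ y = 1) :=
  stmt_4_general htf hΛ K₁ K₂ h₁ hcomm φ hnc
end

section
/- Let Λ be a torsion-free group in which the centralizer of every nontrivial element is cyclic, let Γ be a group and K ≤ Γ a finite index subgroup. If φ: Γ → Λ is a homomorphism with φ(K) cyclic, then φ(Γ) is cyclic. -/
/-- The Mathlib (Dec 2024) definition, removed since: a monoid is torsion-free if no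
nontrivial element has finite order. -/
def Monoid.IsTorsionFree (G : Type*) [Monoid G] : Prop :=
  ∀ g : G, g ≠ 1 → ¬IsOfFinOrder g

/-!
Some fixed power `x ^ n` (with `n ≠ 0`) of every `x ∈ Γ` lies in `K`, so every `b ∈ φ(Γ)` has
`b ^ n ∈ φ(K) = ⟨g⟩`. If `g = 1`, torsion-freeness forces `φ(Γ) = 1`. Otherwise say
`b ^ n = g ^ m`: either `g ^ m = 1` and then `b = 1`, or `b` and `g` both lie in the cyclic, hence
abelian, centralizer of `g ^ m ≠ 1`. Either way `φ(Γ)` lies in the cyclic centralizer of `g`.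
-/

lemma Monoid.IsTorsionFree.eq_one_of_pow_eq_one {G : Type*} [Monoid G]
    (hG : Monoid.IsTorsionFree G) {a : G} {n : ℕ} (hn : n ≠ 0) (h : a ^ n = 1) : a = 1 := by
  by_contra ha
  exact hG a ha (isOfFinOrder_iff_pow_eq_one.mpr ⟨n, Nat.pos_of_ne_zero hn, h⟩)

lemma Subgroup.exists_pow_mem_of_finiteIndex {G : Type*} [Group G] (K : Subgroup G)
    [K.FiniteIndex] : ∃ n ≠ 0, ∀ x : G, x ^ n ∈ K :=
  ⟨K.normalCore.index, K.normalCore.index_ne_zero_of_finite,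
    fun x ↦ K.normalCore_le (K.normalCore.pow_index_mem x)⟩

lemma commute_of_commute_of_isCyclic_centralizer {G : Type*} [Group G] {a b c : G}
    (hc : IsCyclic (Subgroup.centralizer {c})) (ha : Commute a c) (hb : Commute b c) :
    Commute a b := by
  have hab := hc.isMulCommutative.is_comm.comm
    (⟨a, Subgroup.mem_centralizer_singleton_iff.mpr ha.eq⟩ : Subgroup.centralizer {c})
    ⟨b, Subgroup.mem_centralizer_singleton_iff.mpr hb.eq⟩
  exact Subtype.ext_iff.mp hab

lemma commute_of_pow_eq_zpow {Λ : Type*} [Group Λ] (htf : Monoid.IsTorsionFree Λ)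
    (hΛ : ∀ l : Λ, l ≠ 1 → IsCyclic (Subgroup.centralizer {l})) {b g : Λ} {n : ℕ} {m : ℤ}
    (hn : n ≠ 0) (h : b ^ n = g ^ m) : Commute b g := by
  by_cases hgm : g ^ m = 1
  · rw [htf.eq_one_of_pow_eq_one hn (h.trans hgm)]
    exact Commute.one_left g
  · refine commute_of_commute_of_isCyclic_centralizer (hΛ _ hgm) ?_ (Commute.self_zpow g m)
    rw [← h]
    exact Commute.self_pow b n

lemma Subgroup.isCyclic_of_pow_mem {Λ : Type*} [Group Λ] (htf : Monoid.IsTorsionFree Λ)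
    (hΛ : ∀ l : Λ, l ≠ 1 → IsCyclic (Subgroup.centralizer {l})) {H C : Subgroup Λ} [hC : IsCyclic C]
    {n : ℕ} (hn : n ≠ 0) (hpow : ∀ b ∈ H, b ^ n ∈ C) : IsCyclic H := by
  obtain ⟨g, hg⟩ := hC.exists_generator
  have hzpow : ∀ b ∈ H, ∃ m : ℤ, b ^ n = (g : Λ) ^ m := fun b hb ↦ by
    obtain ⟨m, hm⟩ := hg ⟨b ^ n, hpow b hb⟩
    exact ⟨m, (congrArg Subtype.val hm).symm⟩
  by_cases hg1 : (g : Λ) = 1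
  · refine Subgroup.isCyclic_of_le (H' := ⊥) fun b hb ↦ ?_
    obtain ⟨m, hm⟩ := hzpow b hb
    rw [hg1, one_zpow] at hm
    exact (Subgroup.mem_bot).mpr (htf.eq_one_of_pow_eq_one hn hm)
  · have := hΛ _ hg1
    refine Subgroup.isCyclic_of_le (H' := Subgroup.centralizer {(g : Λ)}) fun b hb ↦ ?_
    obtain ⟨m, hm⟩ := hzpow b hb
    exact Subgroup.mem_centralizer_singleton_iff.mpr
      (commute_of_pow_eq_zpow htf hΛ hn hm).eq

theorem stmt_5 {Λ : Type*} [Group Λ] (htf : Monoid.IsTorsionFree Λ)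
    (hΛ : ∀ l : Λ, l ≠ 1 → IsCyclic (Subgroup.centralizer {l}))
    {Γ : Type*} [Group Γ] (K : Subgroup Γ) (hfi : K.FiniteIndex)
    (φ : Γ →* Λ) (hK : IsCyclic (K.map φ)) : IsCyclic φ.range := by
  obtain ⟨n, hn, hpow⟩ := K.exists_pow_mem_of_finiteIndex
  refine Subgroup.isCyclic_of_pow_mem htf hΛ (C := K.map φ) hn ?_
  rintro _ ⟨x, rfl⟩
  exact ⟨x ^ n, hpow x, map_pow φ x n⟩
end

section
/- Let G₁, ..., G_n be groups, and let Γ ≤ G₁ × ... × G_n be a finite index subgroup with each projection π_i: Γ → G_i surjective. Let Λ be a torsion-free group in which centralizers of nontrivial elements are cyclic. Then any homomorphism φ: Γ → Λ either has cyclic image or factors through π_i for some i. -/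
/-!
Let `Γᵢ = Γ ∩ Gᵢ`. Since `Γ` has finite index, there is `e ≠ 0` with `g ^ e ∈ Γ` for every
`g ∈ ∏ Gᵢ`; applied to `g ∈ Gᵢ`, this makes every `γ ^ e` with `γ ∈ Γ` a product of pairwise
commuting elements of the `Γᵢ`. If `φ` is nontrivial
on two factors `Γᵢ`, `Γⱼ`, say at `a` and `b`, then `φ a` commutes with all of `φ(Γⱼ)` for
`j ≠ i`, and with `φ(Γᵢ)` through `φ b`; as commutation is transitive on the nontrivial elements
of `Λ`, it commutes with `φ γ ^ e` and hence with `φ γ`, so `φ(Γ)` lies in the cyclic centralizer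
of `φ a`. Otherwise `φ` is trivial on all `Γⱼ` but one `Γᵢ`, so `φ` kills the `e`-th powers of
`ker πᵢ`, hence `ker πᵢ` itself since `Λ` is torsion-free, and `φ` factors through `πᵢ`.
-/

open Subgroup

lemma Commute.trans_of_isCyclic_centralizer {Λ : Type*} [Group Λ] {a b c : Λ}
    (hb : IsCyclic (centralizer {b})) (hab : Commute a b) (hbc : Commute b c) : Commute a c := by
  let : CommGroup (centralizer {b}) := IsCyclic.commGroup
  have hmem : ∀ {x : Λ}, Commute x b → x ∈ centralizer {b} := fun h =>
    mem_centralizer_singleton_iff.mpr h.eq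
  exact congrArg Subtype.val (mul_comm (⟨a, hmem hab⟩ : centralizer {b}) ⟨c, hmem hbc.symm⟩)

lemma eq_one_of_pow_eq_one_of_forall_not_isOfFinOrder {Λ : Type*} [Group Λ]
    (htf : ∀ g : Λ, g ≠ 1 → ¬IsOfFinOrder g) {g : Λ} {e : ℕ} (he : e ≠ 0) (h : g ^ e = 1) :
    g = 1 := by
  by_contra hg
  exact htf g hg (isOfFinOrder_iff_pow_eq_one.mpr ⟨e, Nat.pos_of_ne_zero he, h⟩)

namespace Subgroup

variable {ι : Type*} [DecidableEq ι] {G : ι → Type*} [∀ i, Group (G i)]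
  {Γ : Subgroup (∀ i, G i)} {Λ : Type*} [Group Λ]

lemma exists_pow_apply_mem_comap_mulSingle (Γ : Subgroup (∀ i, G i)) [Γ.FiniteIndex] :
    ∃ e ≠ 0, ∀ (γ : Γ) (j : ι), ((γ ^ e : Γ) : ∀ i, G i) j ∈ Γ.comap (MonoidHom.mulSingle G j) := by
  refine ⟨Γ.index.factorial, Nat.factorial_ne_zero _, fun γ j => ?_⟩
  rw [mem_comap, coe_pow, Pi.pow_apply, map_pow]
  exact pow_mem_of_index_ne_zero_of_dvd FiniteIndex.index_ne_zero _
    fun m hm hle => Nat.dvd_factorial hm hle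

/-- The restriction of `φ : Γ →* Λ` to the factor `Γ ∩ G j`, viewed as a subgroup of `G j`. -/
def factorRestrict (φ : Γ →* Λ) (j : ι) : Γ.comap (MonoidHom.mulSingle G j) →* Λ :=
  φ.comp ((MonoidHom.mulSingle G j).subgroupComap Γ)

lemma commute_factorRestrict (φ : Γ →* Λ) {i j : ι} (hij : i ≠ j)
    (a : Γ.comap (MonoidHom.mulSingle G i)) (b : Γ.comap (MonoidHom.mulSingle G j)) :
    Commute (factorRestrict φ i a) (factorRestrict φ j b) :=
  (show Commute ((MonoidHom.mulSingle G i).subgroupComap Γ a)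
    ((MonoidHom.mulSingle G j).subgroupComap Γ b) from
    Subtype.ext (Pi.mulSingle_commute hij (a : G i) (b : G j)).eq).map φ

lemma map_mem_of_factorRestrict_mem [Finite ι] (φ : Γ →* Λ) (K : Subgroup Λ) (y : Γ)
    (hy : ∀ j, (y : ∀ i, G i) j ∈ Γ.comap (MonoidHom.mulSingle G j))
    (hK : ∀ j, factorRestrict φ j ⟨_, hy j⟩ ∈ K) : φ y ∈ K := by
  obtain ⟨y', hy', hyy'⟩ : (y : ∀ i, G i) ∈ (K.comap φ).map Γ.subtype :=
    pi_mem_of_mulSingle_mem _ fun j => ⟨⟨_, hy j⟩, hK j, rfl⟩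
  rwa [← Subtype.ext hyy']

variable [Finite ι] [Γ.FiniteIndex]

lemma isCyclic_range_of_factorRestrict_ne_one (htf : ∀ g : Λ, g ≠ 1 → ¬IsOfFinOrder g)
    (hΛ : ∀ l : Λ, l ≠ 1 → IsCyclic (centralizer {l})) (φ : Γ →* Λ) {i j : ι} (hij : i ≠ j)
    (hi : factorRestrict φ i ≠ 1) (hj : factorRestrict φ j ≠ 1) : IsCyclic φ.range := by
  obtain ⟨a, ha⟩ := DFunLike.ne_iff.mp hi
  obtain ⟨b, hb⟩ := DFunLike.ne_iff.mp hj
  set z := factorRestrict φ i a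
  have hz_factor : ∀ k c, Commute z (factorRestrict φ k c) := by
    intro k c
    rcases eq_or_ne k i with rfl | hki
    · exact (commute_factorRestrict φ hij a b).trans_of_isCyclic_centralizer (hΛ _ hb)
        (commute_factorRestrict φ hij.symm b c)
    · exact commute_factorRestrict φ hki.symm a c
  obtain ⟨e, he, hpow⟩ := exists_pow_apply_mem_comap_mulSingle Γ
  have hz : ∀ γ, Commute z (φ γ) := by
    intro γ
    rcases eq_or_ne (φ γ) 1 with h | h
    · rw [h]
      exact Commute.one_right z
    have hpow_ne : φ γ ^ e ≠ 1 := fun h' =>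
      h (eq_one_of_pow_eq_one_of_forall_not_isOfFinOrder htf he h')
    have hz_pow : φ (γ ^ e) ∈ centralizer {z} := map_mem_of_factorRestrict_mem φ _ _ (hpow γ)
      fun k => mem_centralizer_singleton_iff.mpr (hz_factor k _).eq.symm
    rw [map_pow, mem_centralizer_singleton_iff] at hz_pow
    exact Commute.trans_of_isCyclic_centralizer (hΛ _ hpow_ne) (Commute.symm hz_pow)
      ((Commute.refl _).pow_left e)
  have := hΛ z ha
  refine isCyclic_of_le (H' := centralizer {z}) ?_
  rintro _ ⟨γ, rfl⟩
  exact mem_centralizer_singleton_iff.mpr (hz γ).eq.symm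

lemma map_eq_one_of_apply_eq_one_of_factorRestrict_ne_one
    (htf : ∀ g : Λ, g ≠ 1 → ¬IsOfFinOrder g) (φ : Γ →* Λ) (x : Γ)
    (hx : ∀ j, factorRestrict φ j ≠ 1 → (x : ∀ i, G i) j = 1) : φ x = 1 := by
  obtain ⟨e, he, hpow⟩ := exists_pow_apply_mem_comap_mulSingle Γ
  refine eq_one_of_pow_eq_one_of_forall_not_isOfFinOrder htf he ?_
  rw [← map_pow, ← mem_bot]
  refine map_mem_of_factorRestrict_mem φ ⊥ _ (hpow x) fun j => ?_
  by_cases hj : factorRestrict φ j = 1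
  · rw [hj, MonoidHom.one_apply]
    exact one_mem _
  · have hx_pow : ((x ^ e : Γ) : ∀ i, G i) j = 1 := by simp [hx j hj]
    rw [show (⟨_, hpow x j⟩ : Γ.comap _) = 1 from Subtype.ext hx_pow, map_one]
    exact one_mem _

end Subgroup

lemma exists_monoidHom_apply_eq_of_apply_eq_one {ι : Type*} {G : ι → Type*}
    [∀ i, Group (G i)] {Γ : Subgroup (∀ i, G i)} {Λ : Type*} [Group Λ] (φ : Γ →* Λ) {i : ι}
    (hsurj : ∀ x : G i, ∃ γ ∈ Γ, γ i = x)
    (hker : ∀ γ : Γ, (γ : ∀ i, G i) i = 1 → φ γ = 1) :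
    ∃ ψ : G i →* Λ, ∀ γ : Γ, φ γ = ψ ((γ : ∀ i, G i) i) := by
  let π : Γ →* G i := (Pi.evalMonoidHom G i).comp Γ.subtype
  have hπ : Function.Surjective π := fun x =>
    let ⟨γ, hγ, hx⟩ := hsurj x
    ⟨⟨γ, hγ⟩, hx⟩
  exact ⟨π.liftOfSurjective hπ ⟨φ, hker⟩, fun γ =>
    (π.liftOfRightInverse_comp_apply _ _ ⟨φ, hker⟩ γ).symm⟩

theorem stmt_6 {n : ℕ} {G : Fin n → Type*} [∀ i, Group (G i)]
    (Γ : Subgroup (∀ i, G i)) (hfi : Γ.FiniteIndex)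
    (hsurj : ∀ i, ∀ x : G i, ∃ γ ∈ Γ, γ i = x)
    {Λ : Type*} [Group Λ] (htf : ∀ g : Λ, g ≠ 1 → ¬IsOfFinOrder g)
    (hΛ : ∀ l : Λ, l ≠ 1 → IsCyclic (Subgroup.centralizer {l}))
    (φ : ↥Γ →* Λ) :
    IsCyclic φ.range ∨
      ∃ i, ∃ ψ : G i →* Λ, ∀ γ : ↥Γ, φ γ = ψ ((γ : ∀ i, G i) i) := by
  by_cases htwo : ∃ i j, i ≠ j ∧ factorRestrict φ i ≠ 1 ∧ factorRestrict φ j ≠ 1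
  · obtain ⟨i, j, hij, hi, hj⟩ := htwo
    exact .inl (isCyclic_range_of_factorRestrict_ne_one htf hΛ φ hij hi hj)
  by_cases hone : ∃ i, factorRestrict φ i ≠ 1
  · obtain ⟨i, hi⟩ := hone
    refine .inr ⟨i, exists_monoidHom_apply_eq_of_apply_eq_one φ (hsurj i) fun γ hγ => ?_⟩
    refine map_eq_one_of_apply_eq_one_of_factorRestrict_ne_one htf φ γ fun j hj => ?_
    obtain rfl : j = i := by_contra fun hji => htwo ⟨j, i, hji, hj, hi⟩
    exact hγ
  · simp only [not_exists, not_not] at hone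
    have hφ : φ = 1 := MonoidHom.ext fun γ =>
      map_eq_one_of_apply_eq_one_of_factorRestrict_ne_one htf φ γ fun j hj => (hj (hone j)).elim
    rw [hφ, MonoidHom.range_one]
    exact .inl inferInstance
end

section
/- Let G₁, G₂ be groups and Γ ≤ G₁ × G₂ a finite index subgroup surjecting onto each factor. Set K₁ = Γ ∩ (G₁ × 1) and K₂ = Γ ∩ (1 × G₂). Then K₁ × K₂ (identified with its image in G₁ × G₂) is a finite index subgroup of Γ. -/
/-!
The preimages `Γ.comap inl` and `Γ.comap inr` of `Γ` under the axis embeddings have finite index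
in `G₁` and `G₂`, and their product lies in `K₁ K₂`. So `K₁ K₂` has finite index in `G₁ × G₂`,
hence in `Γ`.
-/

namespace Subgroup

variable {G G₁ G₂ : Type*} [Group G] [Group G₁] [Group G₂]

instance finiteIndex_comap (H : Subgroup G) [H.FiniteIndex] (f : G₁ →* G) :
    (H.comap f).FiniteIndex :=
  ⟨by rw [index_comap]; exact (isFiniteRelIndex_of_finiteIndex (K := f.range)).relIndex_ne_zero⟩

instance finiteIndex_prod (H : Subgroup G₁) (K : Subgroup G₂) [H.FiniteIndex] [K.FiniteIndex] :
    (H.prod K).FiniteIndex :=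
  ⟨by rw [index_prod]; exact mul_ne_zero FiniteIndex.index_ne_zero FiniteIndex.index_ne_zero⟩

theorem comap_inl_prod_comap_inr_le (Γ : Subgroup (G₁ × G₂)) :
    (Γ.comap (MonoidHom.inl G₁ G₂)).prod (Γ.comap (MonoidHom.inr G₁ G₂)) ≤
      (Γ ⊓ (⊤ : Subgroup G₁).prod ⊥) ⊔ (Γ ⊓ (⊥ : Subgroup G₁).prod ⊤) := by
  rintro ⟨x, y⟩ ⟨hx, hy⟩
  have hxy : ((x, y) : G₁ × G₂) = (x, 1) * (1, y) := by simp
  rw [hxy]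
  exact mul_mem (mem_sup_left ⟨hx, trivial, rfl⟩) (mem_sup_right ⟨hy, rfl, trivial⟩)

end Subgroup

open Subgroup in
theorem stmt_7_general {G₁ G₂ : Type*} [Group G₁] [Group G₂]
    (Γ : Subgroup (G₁ × G₂)) (hfi : Γ.FiniteIndex) :
    (((Γ ⊓ (⊤ : Subgroup G₁).prod (⊥ : Subgroup G₂)) ⊔
      (Γ ⊓ (⊥ : Subgroup G₁).prod (⊤ : Subgroup G₂))).relIndex Γ) ≠ 0 := by
  have := finiteIndex_of_le (comap_inl_prod_comap_inr_le Γ)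
  exact (isFiniteRelIndex_of_finiteIndex (K := Γ)).relIndex_ne_zero

theorem stmt_7 {G₁ G₂ : Type*} [Group G₁] [Group G₂]
    (Γ : Subgroup (G₁ × G₂)) (hfi : Γ.FiniteIndex)
    (hsurj₁ : ∀ x : G₁, ∃ γ ∈ Γ, γ.1 = x) (hsurj₂ : ∀ y : G₂, ∃ γ ∈ Γ, γ.2 = y) :
    (((Γ ⊓ (⊤ : Subgroup G₁).prod (⊥ : Subgroup G₂)) ⊔
      (Γ ⊓ (⊥ : Subgroup G₁).prod (⊤ : Subgroup G₂))).relIndex Γ) ≠ 0 :=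
  stmt_7_general Γ hfi
end

section
/- Let Λ be a torsion-free group with all centralizers of nontrivial elements cyclic, let G be a group with elements T₁₂, T₂₃, T₁₃, T₁₂₃ satisfying T₁₂T₂₃T₁₃ = T₁₂₃ with T₁₂₃ commuting with both T₁₂ and T₂₃, and let φ: G → Λ be a homomorphism such that φ(T₁₂) and φ(T₂₃) do not commute. Then φ(T₁₂₃) = 1 and φ(T₁₃) = φ(T₂₃)⁻¹φ(T₁₂)⁻¹. -/
/-
Both φ(T₁₂) and φ(T₂₃) commute with φ(T₁₂₃). If φ(T₁₂₃) were nontrivial, its centralizer would be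
cyclic, hence abelian, and φ(T₁₂), φ(T₂₃) would commute. So φ(T₁₂₃) = 1, and the relation
T₁₂T₂₃T₁₃ = T₁₂₃ then determines φ(T₁₃).
-/

theorem Commute.of_isCyclic_centralizer {Λ : Type*} [Group Λ] {l a b : Λ}
    (hl : IsCyclic (Subgroup.centralizer {l})) (ha : Commute l a) (hb : Commute l b) :
    Commute a b :=
  setLike_mul_comm (Subgroup.mem_centralizer_singleton_iff.mpr ha.eq.symm)
    (Subgroup.mem_centralizer_singleton_iff.mpr hb.eq.symm)

theorem eq_one_of_commute_of_not_commute {Λ : Type*} [Group Λ]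
    (hΛ : ∀ l : Λ, l ≠ 1 → IsCyclic (Subgroup.centralizer {l})) {l a b : Λ}
    (ha : Commute l a) (hb : Commute l b) (hab : ¬Commute a b) : l = 1 := by
  by_contra hl
  exact hab (.of_isCyclic_centralizer (hΛ l hl) ha hb)

theorem stmt_9_general {Λ : Type*} [Group Λ]
    (hΛ : ∀ l : Λ, l ≠ 1 → IsCyclic (Subgroup.centralizer {l}))
    {G : Type*} [Group G] (T₁₂ T₂₃ T₁₃ T₁₂₃ : G)
    (hrel : T₁₂ * T₂₃ * T₁₃ = T₁₂₃)
    (hc₁ : Commute T₁₂₃ T₁₂) (hc₂ : Commute T₁₂₃ T₂₃)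
    (φ : G →* Λ) (hnc : ¬ Commute (φ T₁₂) (φ T₂₃)) :
    φ T₁₂₃ = 1 ∧ φ T₁₃ = (φ T₂₃)⁻¹ * (φ T₁₂)⁻¹ := by
  have h₁₂₃ : φ T₁₂₃ = 1 := eq_one_of_commute_of_not_commute hΛ (hc₁.map φ) (hc₂.map φ) hnc
  refine ⟨h₁₂₃, ?_⟩
  have hprod : φ T₁₂ * φ T₂₃ * φ T₁₃ = 1 := by rw [← map_mul, ← map_mul, hrel, h₁₂₃]
  rw [← mul_inv_rev]
  exact eq_inv_of_mul_eq_one_right hprod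

theorem stmt_9 {Λ : Type*} [Group Λ] (htf : ∀ g : Λ, g ≠ 1 → ¬IsOfFinOrder g)
    (hΛ : ∀ l : Λ, l ≠ 1 → IsCyclic (Subgroup.centralizer {l}))
    {G : Type*} [Group G] (T₁₂ T₂₃ T₁₃ T₁₂₃ : G)
    (hrel : T₁₂ * T₂₃ * T₁₃ = T₁₂₃)
    (hc₁ : Commute T₁₂₃ T₁₂) (hc₂ : Commute T₁₂₃ T₂₃)
    (φ : G →* Λ) (hnc : ¬ Commute (φ T₁₂) (φ T₂₃)) :
    φ T₁₂₃ = 1 ∧ φ T₁₃ = (φ T₂₃)⁻¹ * (φ T₁₂)⁻¹ :=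
  stmt_9_general hΛ T₁₂ T₂₃ T₁₃ T₁₂₃ hrel hc₁ hc₂ φ hnc
end

section
/- Let 1 → ℤ → G →p→ Q → 1 be a central extension and let H ≤ G be a finite index subgroup containing the central ℤ. If a generator α of the central ℤ has a nonzero power lying in the commutator subgroup of H, then every homomorphism from H to a torsion-free group with cyclic centralizers of nontrivial elements kills α, hence factors through p restricted to H. -/
namespace MonoidHom

variable {K Λ : Type*} [Group K] [Group Λ]

theorem map_mem_centralizer_map_of_mem_center (φ : K →* Λ) {a : K} (ha : a ∈ Subgroup.center K)
    (x : K) : φ x ∈ Subgroup.centralizer {φ a} := by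
  rw [Subgroup.mem_centralizer_singleton_iff, ← map_mul, ← map_mul,
    Subgroup.mem_center_iff.mp ha x]

theorem commutator_le_ker_of_isCyclic_centralizer (φ : K →* Λ) {a : K}
    (ha : a ∈ Subgroup.center K) (hcyc : IsCyclic (Subgroup.centralizer {φ a})) :
    commutator K ≤ φ.ker := by
  let _ := hcyc.commGroup
  let ψ := φ.codRestrict _ (φ.map_mem_centralizer_map_of_mem_center ha)
  calc commutator K ≤ ψ.ker := Abelianization.commutator_subset_ker ψ
    _ = φ.ker := φ.ker_codRestrict _ _

theorem map_eq_one_of_zpow_mem_commutator (φ : K →* Λ) (htf : Monoid.IsTorsionFree Λ)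
    (hΛ : ∀ l : Λ, l ≠ 1 → IsCyclic (Subgroup.centralizer {l})) {a : K}
    (ha : a ∈ Subgroup.center K) {n : ℤ} (hn : n ≠ 0) (hcomm : a ^ n ∈ commutator K) :
    φ a = 1 := by
  by_contra hφa
  have hpow : φ a ^ n = 1 := by
    rw [← map_zpow]
    exact φ.commutator_le_ker_of_isCyclic_centralizer ha (hΛ _ hφa) hcomm
  exact htf _ hφa (isOfFinOrder_iff_zpow_eq_one.mpr ⟨n, hn, hpow⟩)

theorem map_eq_of_mul_inv_mem_zpowers (φ : K →* Λ) {a : K} (ha : φ a = 1) {x y : K}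
    (hxy : x * y⁻¹ ∈ Subgroup.zpowers a) : φ x = φ y := by
  have hle : Subgroup.zpowers a ≤ φ.ker := Subgroup.zpowers_le.mpr ha
  rw [← mul_inv_eq_one, ← map_inv, ← map_mul]
  exact hle hxy

end MonoidHom

namespace Subgroup

variable {G : Type*} [Group G] {H : Subgroup G}

theorem mk_mem_center {a : G} (ha : a ∈ center G) (haH : a ∈ H) :
    (⟨a, haH⟩ : H) ∈ center H :=
  mem_center_iff.mpr fun x => Subtype.ext (mem_center_iff.mp ha x)

theorem mem_commutator_of_coe_mem_commutator {x : H} (hx : (x : G) ∈ ⁅H, H⁆) :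
    x ∈ _root_.commutator H :=
  (mem_map_iff_mem H.subtype_injective).mp (H.map_subtype_commutator ▸ hx)

theorem mem_zpowers_of_coe_mem_zpowers {x a : H} (hx : (x : G) ∈ zpowers (a : G)) :
    x ∈ zpowers a :=
  (mem_map_iff_mem H.subtype_injective).mp (H.subtype.map_zpowers a ▸ hx)

end Subgroup

theorem stmt_14_general {G : Type*} [Group G] (α : G) (hα : α ∈ Subgroup.center G)
    (H : Subgroup G)
    (hαH : α ∈ H) (n : ℤ) (hn : n ≠ 0) (hcomm : α ^ n ∈ ⁅H, H⁆)
    {Λ : Type*} [Group Λ] (htf : Monoid.IsTorsionFree Λ)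
    (hΛ : ∀ l : Λ, l ≠ 1 → IsCyclic (Subgroup.centralizer {l}))
    (φ : ↥H →* Λ) :
    φ ⟨α, hαH⟩ = 1 ∧
      ∀ h₁ h₂ : ↥H, (h₁ : G) * (h₂ : G)⁻¹ ∈ Subgroup.zpowers α → φ h₁ = φ h₂ := by
  have hkill : φ ⟨α, hαH⟩ = 1 :=
    φ.map_eq_one_of_zpow_mem_commutator htf hΛ (Subgroup.mk_mem_center hα hαH) hn
      (Subgroup.mem_commutator_of_coe_mem_commutator hcomm)
  exact ⟨hkill, fun h₁ h₂ h => φ.map_eq_of_mul_inv_mem_zpowers hkill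
    (Subgroup.mem_zpowers_of_coe_mem_zpowers h)⟩

theorem stmt_14 {G : Type*} [Group G] (α : G) (hα : α ∈ Subgroup.center G)
    (hord : ¬ IsOfFinOrder α) (H : Subgroup G) (hfi : H.FiniteIndex)
    (hαH : α ∈ H) (n : ℤ) (hn : n ≠ 0) (hcomm : α ^ n ∈ ⁅H, H⁆)
    {Λ : Type*} [Group Λ] (htf : Monoid.IsTorsionFree Λ)
    (hΛ : ∀ l : Λ, l ≠ 1 → IsCyclic (Subgroup.centralizer {l}))
    (φ : ↥H →* Λ) :
    φ ⟨α, hαH⟩ = 1 ∧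
      ∀ h₁ h₂ : ↥H, (h₁ : G) * (h₂ : G)⁻¹ ∈ Subgroup.zpowers α → φ h₁ = φ h₂ :=
  stmt_14_general α hα H hαH n hn hcomm htf hΛ φ
end

section
/- Let Λ be a torsion-free group in which centralizers of nontrivial elements are cyclic and let φ: F₂ × ℤ → Λ be a homomorphism whose image is not cyclic. Then φ is trivial on the ℤ factor and factors through the projection F₂ × ℤ → F₂. -/
namespace MonoidHom

variable {G H Λ : Type*} [Group G] [Group H] [Group Λ]

theorem range_le_centralizer_map_of_mem_center (φ : G →* Λ) {z : G}
    (hz : z ∈ Subgroup.center G) : φ.range ≤ Subgroup.centralizer {φ z} := by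
  rintro _ ⟨g, rfl⟩
  rw [Subgroup.mem_centralizer_singleton_iff, ← map_mul, ← map_mul,
    Subgroup.mem_center_iff.mp hz g]

theorem map_eq_one_of_mem_center_of_not_isCyclic_range
    (hΛ : ∀ l : Λ, l ≠ 1 → IsCyclic (Subgroup.centralizer {l})) (φ : G →* Λ)
    (hnc : ¬IsCyclic φ.range) {z : G} (hz : z ∈ Subgroup.center G) : φ z = 1 := by
  by_contra hφz
  have := hΛ _ hφz
  exact hnc (Subgroup.isCyclic_of_le (φ.range_le_centralizer_map_of_mem_center hz))

theorem eq_comp_fst_of_map_inr_eq_one (φ : G × H →* Λ) (h : ∀ y : H, φ (1, y) = 1) :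
    φ = (φ.comp (inl G H)).comp (fst G H) := by
  ext ⟨x, y⟩
  calc φ (x, y) = φ ((x, 1) * (1, y)) := by rw [Prod.mk_mul_mk, mul_one, one_mul]
    _ = φ (x, 1) := by rw [map_mul, h y, mul_one]

end MonoidHom

theorem Prod.mk_one_mem_center {G H : Type*} [Group G] [CommGroup H] (y : H) :
    ((1 : G), y) ∈ Subgroup.center (G × H) :=
  Subgroup.mem_center_iff.mpr fun g ↦ Prod.ext (by simp) (mul_comm _ _)

theorem stmt_17_general {Λ : Type*} [Group Λ]
    (hΛ : ∀ l : Λ, l ≠ 1 → IsCyclic (Subgroup.centralizer {l}))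
    (φ : FreeGroup (Fin 2) × Multiplicative ℤ →* Λ)
    (hnc : ¬ IsCyclic φ.range) :
    (∀ z : Multiplicative ℤ, φ (1, z) = 1) ∧
      ∃ ψ : FreeGroup (Fin 2) →* Λ,
        φ = ψ.comp (MonoidHom.fst (FreeGroup (Fin 2)) (Multiplicative ℤ)) := by
  have hker : ∀ z : Multiplicative ℤ, φ (1, z) = 1 := fun z ↦
    φ.map_eq_one_of_mem_center_of_not_isCyclic_range hΛ hnc (Prod.mk_one_mem_center z)
  exact ⟨hker, _, φ.eq_comp_fst_of_map_inr_eq_one hker⟩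

theorem stmt_17 {Λ : Type*} [Group Λ] (htf : Monoid.IsTorsionFree Λ)
    (hΛ : ∀ l : Λ, l ≠ 1 → IsCyclic (Subgroup.centralizer {l}))
    (φ : FreeGroup (Fin 2) × Multiplicative ℤ →* Λ)
    (hnc : ¬ IsCyclic φ.range) :
    (∀ z : Multiplicative ℤ, φ (1, z) = 1) ∧
      ∃ ψ : FreeGroup (Fin 2) →* Λ,
        φ = ψ.comp (MonoidHom.fst (FreeGroup (Fin 2)) (Multiplicative ℤ)) :=
  stmt_17_general hΛ φ hnc
end
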